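/- arXiv:2512.16544 — 3 statements merged into one kernel-verified Lean document; each statement's English description precedes it below -/
import Mathlib

section
/- Let μ₁ and μ₂ be Borel probability measures on ℝⁿ with finite first moments (∫‖x‖ dμᵢ(x) < ∞ for i = 1,2). Suppose there exists a Markov kernel K from ℝⁿ to ℝⁿ such that (i) for μ₁-almost every x, the measure K x has finite first moment and barycenter x, i.e. ∫ y d(K x)(y) = x, and (ii) μ₁.bind K = μ₂. Then μ₁ ⪯ μ₂ in convex order: for every convex function f : ℝⁿ → ℝ that is μ₂-integrable, f is μ₁-integrable and ∫ f dμ₁ ≤ ∫ f dμ₂. -/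
/-!
Since `K x` has barycenter `x`, Jensen's inequality gives `f x ≤ ∫ f d(K x)` for `μ₁`-a.e. `x`;
integrating against `μ₁` and using `μ₂ = K ∘ₘ μ₁` gives the inequality. Integrability of `f`
on `μ₁` comes from squeezing `f` between an affine minorant, integrable because `μ₁` has a finite
first moment, and `x ↦ ∫ f d(K x)`.
-/

open MeasureTheory ProbabilityTheory

namespace MeasureTheory.Measure

variable {α β E : Type*} [MeasurableSpace α] [MeasurableSpace β] [NormedAddCommGroup E]
  [NormedSpace ℝ E] {μ : Measure α} {κ : Kernel α β} {f : β → E}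

lemma integrable_integral_of_integrable_comp (hf : Integrable f (κ ∘ₘ μ)) :
    Integrable (fun x ↦ ∫ y, f y ∂κ x) μ := by
  rw [comp_eq_comp_const_apply] at hf
  simpa using hf.integral_comp

lemma integral_comp_of_integrable (hf : Integrable f (κ ∘ₘ μ)) :
    ∫ y, f y ∂(κ ∘ₘ μ) = ∫ x, ∫ y, f y ∂κ x ∂μ := by
  rw [comp_eq_comp_const_apply] at hf ⊢
  simpa using Kernel.integral_comp hf

end MeasureTheory.Measure

lemma ConvexOn.exists_continuousLinearMap_add_le {E : Type*} [NormedAddCommGroup E]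
    [NormedSpace ℝ E] {f : E → ℝ} (hf : ConvexOn ℝ Set.univ f) (hfc : Continuous f) :
    ∃ (L : E →L[ℝ] ℝ) (c : ℝ), ∀ x, L x + c ≤ f x := by
  obtain ⟨L, c, hLc, -⟩ := hf.exists_affine_le_of_lt (𝕜 := ℝ) (Set.mem_univ 0)
    (sub_one_lt (f 0)) isClosed_univ (hfc.lowerSemicontinuous.lowerSemicontinuousOn _)
  exact ⟨L, c, fun x ↦ by simpa using hLc ⟨x, Set.mem_univ x⟩⟩

theorem strassen_kernel_implies_convex_order_general (n : ℕ)
    (μ₁ μ₂ : Measure (EuclideanSpace ℝ (Fin n)))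
    [IsProbabilityMeasure μ₁]
    (hmom₁ : Integrable (fun x => ‖x‖) μ₁)
    (K : Kernel (EuclideanSpace ℝ (Fin n)) (EuclideanSpace ℝ (Fin n)))
    [IsMarkovKernel K]
    (hbary : ∀ᵐ x ∂μ₁, Integrable (fun y => y) (K x) ∧ (∫ y, y ∂(K x)) = x)
    (hbind : μ₁.bind (fun x => K x) = μ₂) :
    ∀ f : EuclideanSpace ℝ (Fin n) → ℝ, ConvexOn ℝ Set.univ f → Integrable f μ₂ →
      Integrable f μ₁ ∧ (∫ x, f x ∂μ₁) ≤ ∫ x, f x ∂μ₂ := by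
  intro f hconv hint
  subst hbind
  have hcont : Continuous f := continuousOn_univ.mp (hconv.continuousOn isOpen_univ)
  have hjensen : ∀ᵐ x ∂μ₁, f x ≤ ∫ y, f y ∂K x := by
    filter_upwards [hbary, Measure.ae_integrable_of_integrable_comp hint] with x ⟨hKid, hbar⟩ hfi
    simpa [hbar] using hconv.map_integral_le hcont.continuousOn isClosed_univ
      (.of_forall fun _ ↦ trivial) hKid hfi
  obtain ⟨L, c, hLc⟩ := hconv.exists_continuousLinearMap_add_le hcont
  have hid : Integrable id μ₁ := (integrable_norm_iff aestronglyMeasurable_id).mp hmom₁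
  have hKf : Integrable (fun x ↦ ∫ y, f y ∂K x) μ₁ :=
    Measure.integrable_integral_of_integrable_comp hint
  have hf : Integrable f μ₁ := integrable_of_le_of_le hcont.aestronglyMeasurable
    (.of_forall hLc) hjensen ((L.integrable_comp hid).add (integrable_const c)) hKf
  refine ⟨hf, ?_⟩
  rw [Measure.integral_comp_of_integrable hint]
  exact integral_mono_ae hf hKf hjensen

/-- Theorem 1, Property 2 ⇒ Property 1.
If a Markov kernel `K` has barycenter `x` at `μ₁`-a.e. `x` and pushes `μ₁` to `μ₂`
(via `bind`), then `μ₁ ⪯ μ₂` in convex order. -/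
theorem strassen_kernel_implies_convex_order (n : ℕ)
    (μ₁ μ₂ : Measure (EuclideanSpace ℝ (Fin n)))
    [IsProbabilityMeasure μ₁] [IsProbabilityMeasure μ₂]
    (hmom₁ : Integrable (fun x => ‖x‖) μ₁)
    (hmom₂ : Integrable (fun x => ‖x‖) μ₂)
    (K : Kernel (EuclideanSpace ℝ (Fin n)) (EuclideanSpace ℝ (Fin n)))
    [IsMarkovKernel K]
    (hbary : ∀ᵐ x ∂μ₁, Integrable (fun y => y) (K x) ∧ (∫ y, y ∂(K x)) = x)
    (hbind : μ₁.bind (fun x => K x) = μ₂) :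
    ∀ f : EuclideanSpace ℝ (Fin n) → ℝ, ConvexOn ℝ Set.univ f → Integrable f μ₂ →
      Integrable f μ₁ ∧ (∫ x, f x ∂μ₁) ≤ ∫ x, f x ∂μ₂ :=
  strassen_kernel_implies_convex_order_general n μ₁ μ₂ hmom₁ K hbary hbind
end

section
/- Let μ₁ and μ₂ be Borel probability measures on ℝⁿ with finite first moments, with μ₁ ⪯ μ₂ in convex order, with barycenter zero (∫ x dμ₁(x) = 0), and such that μ₂(H) < 1 for every affine hyperplane H ⊂ ℝⁿ. Let U₀, …, U_N be pairwise disjoint Borel sets with μ₁(U₀ ∪ … ∪ U_N) = 1, p_k := μ₁(U_k) > 0 for each k, and x_k := p_k⁻¹ ∫_{U_k} x dμ₁(x). Define F : (ℝ × ℝⁿ)^N → (ℝ × ℝⁿ)^N by F((a₁,b₁),…,(a_N,b_N))_k := ∫_{ℝⁿ} (1, y) · p_k exp(a_k + ⟨b_k, y⟩) / (p₀ + Σ_{l=1}^N p_l exp(a_l + ⟨b_l, y⟩)) dμ₂(y). Then the point ((p₁, p₁x₁), …, (p_N, p_N x_N)) belongs to the closure of the range of F; equivalently, there is a sequence (a^{(m)},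 b^{(m)}) with F(a^{(m)}, b^{(m)}) → ((p₁, p₁x₁), …, (p_N, p_N x_N)) as m → ∞. -/
open MeasureTheory
open scoped RealInnerProductSpace

/-!
Write `z = ((a₁,b₁),…,(a_N,b_N))`, `t` for the target point and
`Φ(z) = ∫ log Σ_l p_l exp(a_l + ⟪b_l, y⟫) dμ₂(y) - Σ_k p_k (a_k + ⟪b_k, x_k⟫)`, with `(a₀,b₀) = 0`.
Differentiating under the integral, `DΦ(z) = ⟪F z - t, ·⟫` for the pairing
`⟪u, v⟫ = Σ_k (u_k.1 v_k.1 + ⟪u_k.2, v_k.2⟫)`. The integrand is convex in `y`, so convex order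
and Jensen's inequality on each cell `U_l` give `Φ ≥ Σ_l p_l log p_l`. A differentiable function
bounded below has points of arbitrarily small derivative (minimise `Φ(z) + ε ⟪z, z⟫` and let
`ε → 0`), so `F z` comes arbitrarily close to `t`.
-/

/-- Extension of a tuple `((a₁,b₁),…,(a_N,b_N))` by `(a₀,b₀) = (0,0)`. -/
noncomputable def extPair {n N : ℕ}
    (ab : Fin N → ℝ × EuclideanSpace ℝ (Fin n)) :
    Fin (N + 1) → ℝ × EuclideanSpace ℝ (Fin n) :=
  Fin.cases (0, 0) ab

/-- Gibbs-type weight `p_k exp(a_k + ⟨b_k, y⟩) / Σ_l p_l exp(a_l + ⟨b_l, y⟩)`,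
with the convention `(a₀,b₀) = (0,0)`. -/
noncomputable def gibbsWeight {n N : ℕ} (p : Fin (N + 1) → ℝ)
    (ab : Fin N → ℝ × EuclideanSpace ℝ (Fin n)) (k : Fin (N + 1))
    (y : EuclideanSpace ℝ (Fin n)) : ℝ :=
  p k * Real.exp ((extPair ab k).1 + ⟪(extPair ab k).2, y⟫) /
    ∑ l : Fin (N + 1), p l * Real.exp ((extPair ab l).1 + ⟪(extPair ab l).2, y⟫)

section LogSumExp

variable {ι : Type*} [Fintype ι] {c : ι → ℝ}

noncomputable def logSumExp (c u : ι → ℝ) : ℝ :=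
  Real.log (∑ i, c i * Real.exp (u i))

noncomputable def softmax (c u : ι → ℝ) (i : ι) : ℝ :=
  c i * Real.exp (u i) / ∑ j, c j * Real.exp (u j)

lemma log_add_le_logSumExp (hc : ∀ i, 0 < c i) (u : ι → ℝ) (i : ι) :
    Real.log (c i) + u i ≤ logSumExp c u := by
  rw [← Real.log_exp (u i), ← Real.log_mul (hc i).ne' (Real.exp_pos _).ne']
  exact Real.log_le_log (mul_pos (hc i) (Real.exp_pos _))
    (Finset.single_le_sum (fun j _ => (mul_pos (hc j) (Real.exp_pos _)).le) (Finset.mem_univ i))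

variable [Nonempty ι]

lemma sum_mul_exp_pos (hc : ∀ i, 0 < c i) (u : ι → ℝ) : 0 < ∑ i, c i * Real.exp (u i) :=
  Finset.sum_pos (fun i _ => mul_pos (hc i) (Real.exp_pos _)) Finset.univ_nonempty

lemma softmax_eq_mul_exp_sub (hc : ∀ i, 0 < c i) (u : ι → ℝ) (i : ι) :
    softmax c u i = c i * Real.exp (u i - logSumExp c u) := by
  rw [Real.exp_sub, logSumExp, Real.exp_log (sum_mul_exp_pos hc u), softmax, mul_div_assoc]

lemma softmax_nonneg (hc : ∀ i, 0 < c i) (u : ι → ℝ) (i : ι) : 0 ≤ softmax c u i :=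
  div_nonneg (mul_pos (hc i) (Real.exp_pos _)).le (sum_mul_exp_pos hc u).le

lemma sum_softmax (hc : ∀ i, 0 < c i) (u : ι → ℝ) : ∑ i, softmax c u i = 1 := by
  simp only [softmax, ← Finset.sum_div, div_self (sum_mul_exp_pos hc u).ne']

lemma softmax_le_one (hc : ∀ i, 0 < c i) (u : ι → ℝ) (i : ι) : softmax c u i ≤ 1 :=
  sum_softmax hc u ▸ Finset.single_le_sum (fun j _ => softmax_nonneg hc u j) (Finset.mem_univ i)

lemma continuous_softmax (hc : ∀ i, 0 < c i) (i : ι) : Continuous fun u : ι → ℝ => softmax c u i :=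
  ((continuous_apply i).rexp.const_mul _).div
    (continuous_finsetSum _ fun j _ => ((continuous_apply j).rexp.const_mul _))
    fun u => (sum_mul_exp_pos hc u).ne'

lemma lipschitzWith_logSumExp (hc : ∀ i, 0 < c i) : LipschitzWith 1 (logSumExp c) := by
  refine LipschitzWith.of_le_add fun u v => ?_
  rw [logSumExp, logSumExp, ← Real.log_exp (dist u v),
    ← Real.log_mul (sum_mul_exp_pos hc v).ne' (Real.exp_pos _).ne']
  refine Real.log_le_log (sum_mul_exp_pos hc u) ?_
  rw [Finset.sum_mul]
  refine Finset.sum_le_sum fun i _ => ?_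
  rw [mul_assoc, ← Real.exp_add]
  refine mul_le_mul_of_nonneg_left (Real.exp_le_exp.2 ?_) (hc i).le
  have := (Real.dist_eq (u i) (v i)) ▸ dist_le_pi_dist u v i
  linarith [le_abs_self (u i - v i)]

lemma convexOn_logSumExp (hc : ∀ i, 0 < c i) : ConvexOn ℝ Set.univ (logSumExp c) := by
  refine ⟨convex_univ, fun u _ v _ a b ha hb hab => ?_⟩
  set L := a * logSumExp c u + b * logSumExp c v
  -- shift both arguments by their log-sum-exp and use convexity of `exp` termwise
  have hterm : ∀ i, c i * Real.exp ((a • u + b • v) i)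
      ≤ Real.exp L * (a * softmax c u i + b * softmax c v i) := by
    intro i
    have hexp := convexOn_exp.2 (Set.mem_univ (u i - logSumExp c u))
      (Set.mem_univ (v i - logSumExp c v)) ha hb hab
    simp only [smul_eq_mul] at hexp
    rw [softmax_eq_mul_exp_sub hc, softmax_eq_mul_exp_sub hc]
    calc c i * Real.exp ((a • u + b • v) i)
        = Real.exp L * (c i * Real.exp (a * (u i - logSumExp c u)
            + b * (v i - logSumExp c v))) := by
          rw [mul_left_comm, ← Real.exp_add]
          simp only [Pi.add_apply, Pi.smul_apply, smul_eq_mul, L]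
          ring_nf
      _ ≤ Real.exp L * (c i * (a * Real.exp (u i - logSumExp c u)
            + b * Real.exp (v i - logSumExp c v))) := by
          gcongr
          exact (hc i).le
      _ = _ := by ring
  calc logSumExp c (a • u + b • v) ≤ Real.log (Real.exp L) := by
        refine Real.log_le_log (sum_mul_exp_pos hc _)
          ((Finset.sum_le_sum fun i _ => hterm i).trans ?_)
        rw [← Finset.mul_sum, Finset.sum_add_distrib, ← Finset.mul_sum, ← Finset.mul_sum,
          sum_softmax hc, sum_softmax hc, mul_one, mul_one, hab, mul_one]
    _ = a • logSumExp c u + b • logSumExp c v := Real.log_exp L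

lemma hasFDerivAt_logSumExp (hc : ∀ i, 0 < c i) (u : ι → ℝ) :
    HasFDerivAt (logSumExp c)
      (∑ i, softmax c u i • (ContinuousLinearMap.proj i : (ι → ℝ) →L[ℝ] ℝ)) u := by
  have hsum : HasFDerivAt (fun u : ι → ℝ => ∑ i, c i * Real.exp (u i))
      (∑ i, (c i * Real.exp (u i)) • (ContinuousLinearMap.proj i : (ι → ℝ) →L[ℝ] ℝ)) u :=
    HasFDerivAt.fun_sum fun i _ => by
      simpa [smul_smul] using ((hasFDerivAt_apply i u).exp).const_mul (c i)
  refine (hsum.log (sum_mul_exp_pos hc u).ne').congr_fderiv ?_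
  simp only [Finset.smul_sum, smul_smul, softmax, div_eq_inv_mul]

end LogSumExp

section Potential

variable {ι E : Type*} [NormedAddCommGroup E] [InnerProductSpace ℝ E]

def potential (θ : ι → ℝ × E) (y : E) (i : ι) : ℝ := (θ i).1 + ⟪(θ i).2, y⟫

noncomputable def potentialAffineMap (θ : ι → ℝ × E) : E →ᵃ[ℝ] ι → ℝ where
  toFun := potential θ
  linear := LinearMap.pi fun i => innerₛₗ ℝ (θ i).2
  map_vadd' y v := by
    ext i
    simp [potential, inner_add_right, add_left_comm]

noncomputable def potentialCLM (y : E) : (ι → ℝ × E) →L[ℝ] ι → ℝ :=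
  ContinuousLinearMap.pi fun i =>
    (ContinuousLinearMap.fst ℝ ℝ E).comp (ContinuousLinearMap.proj i) +
      (innerSL ℝ y).comp ((ContinuousLinearMap.snd ℝ ℝ E).comp (ContinuousLinearMap.proj i))

@[simp] lemma potentialCLM_apply (y : E) (θ : ι → ℝ × E) : potentialCLM y θ = potential θ y := by
  ext i
  simp [potentialCLM, potential, real_inner_comm]

lemma continuous_potential (θ : ι → ℝ × E) : Continuous (potential θ) :=
  continuous_pi fun _ => continuous_const.add (continuous_const.inner continuous_id)

variable [Fintype ι]

lemma norm_potential_le (θ : ι → ℝ × E) (y : E) : ‖potential θ y‖ ≤ ‖θ‖ * (1 + ‖y‖) := by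
  refine pi_norm_le_iff_of_nonneg (by positivity) |>.2 fun i => ?_
  have h₁ : ‖(θ i).1‖ ≤ ‖θ‖ := (norm_fst_le _).trans (norm_le_pi_norm θ i)
  have h₂ : ‖(θ i).2‖ ≤ ‖θ‖ := (norm_snd_le _).trans (norm_le_pi_norm θ i)
  calc ‖potential θ y i‖ ≤ ‖(θ i).1‖ + ‖(θ i).2‖ * ‖y‖ :=
        (norm_add_le _ _).trans (by gcongr; exact norm_inner_le_norm _ _)
    _ ≤ ‖θ‖ * (1 + ‖y‖) := by nlinarith [norm_nonneg y]

variable {c : ι → ℝ} [Nonempty ι]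

lemma convexOn_logSumExp_potential (hc : ∀ i, 0 < c i) (θ : ι → ℝ × E) :
    ConvexOn ℝ Set.univ fun y => logSumExp c (potential θ y) :=
  (convexOn_logSumExp hc).comp_affineMap (potentialAffineMap θ)

lemma continuous_logSumExp_potential (hc : ∀ i, 0 < c i) (θ : ι → ℝ × E) :
    Continuous fun y => logSumExp c (potential θ y) :=
  (lipschitzWith_logSumExp hc).continuous.comp (continuous_potential θ)

lemma integrable_logSumExp_potential [MeasurableSpace E] [OpensMeasurableSpace E]
    {μ : Measure E} [IsFiniteMeasure μ] (hμ : Integrable (fun y => ‖y‖) μ)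
    (hc : ∀ i, 0 < c i) (θ : ι → ℝ × E) :
    Integrable (fun y => logSumExp c (potential θ y)) μ := by
  refine Integrable.mono' ((integrable_const (|logSumExp c 0| + ‖θ‖)).add (hμ.const_mul ‖θ‖))
    (continuous_logSumExp_potential hc θ).aestronglyMeasurable (ae_of_all _ fun y => ?_)
  have hlip : |logSumExp c (potential θ y) - logSumExp c 0| ≤ ‖potential θ y‖ := by
    simpa [Real.dist_eq] using (lipschitzWith_logSumExp hc).dist_le_mul (potential θ y) 0
  simp only [Pi.add_apply, Real.norm_eq_abs]
  linarith [norm_potential_le θ y,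
    abs_sub_abs_le_abs_sub (logSumExp c (potential θ y)) (logSumExp c 0)]

end Potential

section Pairing

variable {ι E : Type*} [Fintype ι] [NormedAddCommGroup E] [InnerProductSpace ℝ E]

noncomputable def pairing : (ι → ℝ × E) →L[ℝ] (ι → ℝ × E) →L[ℝ] ℝ :=
  ∑ i, ((ContinuousLinearMap.mul ℝ ℝ).bilinearComp
      ((ContinuousLinearMap.fst ℝ ℝ E).comp (ContinuousLinearMap.proj i))
      ((ContinuousLinearMap.fst ℝ ℝ E).comp (ContinuousLinearMap.proj i)) +
    (innerSL ℝ).bilinearComp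
      ((ContinuousLinearMap.snd ℝ ℝ E).comp (ContinuousLinearMap.proj i))
      ((ContinuousLinearMap.snd ℝ ℝ E).comp (ContinuousLinearMap.proj i)))

lemma pairing_apply (u v : ι → ℝ × E) :
    pairing u v = ∑ i, ((u i).1 * (v i).1 + ⟪(u i).2, (v i).2⟫) := by
  simp [pairing]

lemma pairing_self (u : ι → ℝ × E) :
    pairing u u = ∑ i, (‖(u i).1‖ ^ 2 + ‖(u i).2‖ ^ 2) := by
  simp [pairing_apply, sq]

lemma sq_norm_le_pairing_self (u : ι → ℝ × E) : ‖u‖ ^ 2 ≤ pairing u u := by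
  have hterm : ∀ i, ‖(u i).1‖ ^ 2 + ‖(u i).2‖ ^ 2 ≤ pairing u u := fun i =>
    pairing_self u ▸ Finset.single_le_sum (f := fun j => ‖(u j).1‖ ^ 2 + ‖(u j).2‖ ^ 2)
      (fun j _ => by positivity) (Finset.mem_univ i)
  have hnonneg : 0 ≤ pairing u u := pairing_self u ▸ Finset.sum_nonneg fun i _ => by positivity
  have hsqrt : ‖u‖ ≤ √(pairing u u) :=
    pi_norm_le_iff_of_nonneg (Real.sqrt_nonneg _) |>.2 fun i => norm_prod_le_iff.2
      ⟨Real.le_sqrt_of_sq_le (by linarith [hterm i, sq_nonneg ‖(u i).2‖]),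
        Real.le_sqrt_of_sq_le (by linarith [hterm i, sq_nonneg ‖(u i).1‖])⟩
  exact (Real.le_sqrt (norm_nonneg u) hnonneg).1 hsqrt

end Pairing

section Penalty

open Filter

variable {V : Type*} [NormedAddCommGroup V] [NormedSpace ℝ V]

lemma norm_le_norm_apply_of_sq_norm_le (B : V →L[ℝ] V →L[ℝ] ℝ) (hB : ∀ u, ‖u‖ ^ 2 ≤ B u u)
    (u : V) : ‖u‖ ≤ ‖B u‖ := by
  rcases (norm_nonneg u).eq_or_lt with h | h
  · exact h ▸ norm_nonneg _
  · refine le_of_mul_le_mul_right ?_ h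
    calc ‖u‖ * ‖u‖ = ‖u‖ ^ 2 := (sq _).symm
      _ ≤ ‖B u u‖ := (hB u).trans (le_abs_self _)
      _ ≤ ‖B u‖ * ‖u‖ := (B u).le_opNorm u

lemma norm_precompR_add_precompL_le (B : V →L[ℝ] V →L[ℝ] ℝ) (z : V) :
    ‖B.precompR V z (ContinuousLinearMap.id ℝ V) + B.precompL V (ContinuousLinearMap.id ℝ V) z‖
      ≤ 2 * ‖B‖ * ‖z‖ := by
  refine ContinuousLinearMap.opNorm_le_bound _ (by positivity) fun v => ?_
  simp only [FunLike.coe_add, Pi.add_apply, ContinuousLinearMap.precompR_apply,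
    ContinuousLinearMap.precompL_apply, ContinuousLinearMap.id_apply]
  have h₁ := B.le_opNorm₂ z v
  have h₂ := B.le_opNorm₂ v z
  calc ‖B z v + B v z‖ ≤ ‖B z v‖ + ‖B v z‖ := norm_add_le _ _
    _ ≤ 2 * ‖B‖ * ‖z‖ * ‖v‖ := by linarith

variable [ProperSpace V] {B : V →L[ℝ] V →L[ℝ] ℝ} {Φ : V → ℝ} {Φ' : V → V →L[ℝ] ℝ} {m : ℝ}

/-- `z` is a minimiser of the penalised function `Φ + ε B(z, z)`. -/
lemma exists_norm_fderiv_le_of_penalized (hB : ∀ u, ‖u‖ ^ 2 ≤ B u u)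
    (hΦ : ∀ z, HasFDerivAt Φ (Φ' z) z) (hm : ∀ z, m ≤ Φ z) {ε : ℝ} (hε : 0 < ε) :
    ∃ z, ‖Φ' z‖ ≤ 2 * ε * ‖B‖ * ‖z‖ ∧ ε * ‖z‖ ^ 2 ≤ Φ 0 - m := by
  set Q' : V → V →L[ℝ] ℝ := fun z =>
    B.precompR V z (ContinuousLinearMap.id ℝ V) + B.precompL V (ContinuousLinearMap.id ℝ V) z
  set f : V → ℝ := fun z => Φ z + ε * B z z
  have hf : ∀ z, HasFDerivAt f (Φ' z + ε • Q' z) z := fun z =>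
    (hΦ z).add ((B.hasFDerivAt_of_bilinear (hasFDerivAt_id z) (hasFDerivAt_id z)).const_mul ε)
  have hcoercive : ∀ z, m + ε * ‖z‖ ^ 2 ≤ f z := fun z =>
    add_le_add (hm z) (mul_le_mul_of_nonneg_left (hB z) hε.le)
  have htendsto : Tendsto f (cocompact V) atTop :=
    tendsto_atTop_mono hcoercive <| tendsto_atTop_add_const_left _ m <|
      ((tendsto_pow_atTop two_ne_zero).comp tendsto_norm_cocompact_atTop).const_mul_atTop hε
  obtain ⟨z, hz⟩ :=
    (continuous_iff_continuousAt.2 fun z => (hf z).continuousAt).exists_forall_le htendsto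
  have hcrit : Φ' z + ε • Q' z = 0 :=
    IsLocalMin.hasFDerivAt_eq_zero (Eventually.of_forall hz) (hf z)
  refine ⟨z, ?_, ?_⟩
  · rw [eq_neg_of_add_eq_zero_left hcrit, norm_neg, norm_smul, Real.norm_of_nonneg hε.le]
    have := norm_precompR_add_precompL_le B z
    calc ε * ‖Q' z‖ ≤ ε * (2 * ‖B‖ * ‖z‖) := mul_le_mul_of_nonneg_left this hε.le
      _ = 2 * ε * ‖B‖ * ‖z‖ := by ring
  · have h0 : f 0 = Φ 0 := by simp [f]
    linarith [hcoercive z, hz 0]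

theorem exists_norm_fderiv_lt_of_forall_le (hB : ∀ u, ‖u‖ ^ 2 ≤ B u u)
    (hΦ : ∀ z, HasFDerivAt Φ (Φ' z) z) (hm : ∀ z, m ≤ Φ z) {δ : ℝ} (hδ : 0 < δ) :
    ∃ z, ‖Φ' z‖ < δ := by
  set M := Φ 0 - m
  have hM : 0 ≤ M := sub_nonneg.2 (hm 0)
  set K := 4 * (‖B‖ ^ 2 + 1) * (M + 1)
  have hK : 0 < K := by positivity
  set ε := δ ^ 2 / K
  have hε : 0 < ε := by positivity
  obtain ⟨z, hz₁, hz₂⟩ := exists_norm_fderiv_le_of_penalized hB hΦ hm hε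
  refine ⟨z, lt_of_pow_lt_pow_left₀ 2 hδ.le ?_⟩
  have hBM : 4 * ‖B‖ ^ 2 * M < K := by nlinarith [sq_nonneg ‖B‖]
  calc ‖Φ' z‖ ^ 2 ≤ (2 * ε * ‖B‖ * ‖z‖) ^ 2 := pow_le_pow_left₀ (norm_nonneg _) hz₁ 2
    _ = 4 * ‖B‖ ^ 2 * ε * (ε * ‖z‖ ^ 2) := by ring
    _ ≤ 4 * ‖B‖ ^ 2 * ε * M := by gcongr
    _ < K * ε := by nlinarith
    _ = δ ^ 2 := mul_div_cancel₀ _ hK.ne'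

end Penalty

section Jensen

variable {α ι E : Type*} [MeasurableSpace α] {μ : Measure α} [IsFiniteMeasure μ]
  [NormedAddCommGroup E] [NormedSpace ℝ E] [CompleteSpace E] {f : α → E} {g : E → ℝ}

lemma ConvexOn.measureReal_mul_map_setAverage_le (hg : ConvexOn ℝ Set.univ g)
    (hgc : Continuous g) (hf : Integrable f μ) (hgf : Integrable (g ∘ f) μ) (s : Set α) :
    μ.real s * g (⨍ x in s, f x ∂μ) ≤ ∫ x in s, g (f x) ∂μ := by
  by_cases hs : μ s = 0
  · simp [Measure.real, hs, Measure.restrict_eq_zero.2 hs]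
  have hjensen := hg.map_set_average_le hgc.continuousOn isClosed_univ hs (measure_ne_top μ s)
    (ae_of_all _ fun _ => Set.mem_univ _) hf.integrableOn hgf.integrableOn
  rw [setAverage_eq (f := fun x => g (f x)), smul_eq_mul] at hjensen
  have hpos : 0 < μ.real s := ENNReal.toReal_pos hs (measure_ne_top μ s)
  calc μ.real s * g (⨍ x in s, f x ∂μ)
      ≤ μ.real s * ((μ.real s)⁻¹ * ∫ x in s, g (f x) ∂μ) :=
        mul_le_mul_of_nonneg_left hjensen hpos.le
    _ = ∫ x in s, g (f x) ∂μ := mul_inv_cancel_left₀ hpos.ne' _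

lemma ConvexOn.sum_measureReal_mul_map_setAverage_le [Fintype ι] {U : ι → Set α}
    (hg : ConvexOn ℝ Set.univ g) (hgc : Continuous g) (hf : Integrable f μ)
    (hgf : Integrable (g ∘ f) μ) (hUm : ∀ i, MeasurableSet (U i))
    (hUd : Pairwise (Function.onFun Disjoint U)) (hU : ∀ᵐ x ∂μ, x ∈ ⋃ i, U i) :
    ∑ i, μ.real (U i) * g (⨍ x in U i, f x ∂μ) ≤ ∫ x, g (f x) ∂μ :=
  calc ∑ i, μ.real (U i) * g (⨍ x in U i, f x ∂μ)
      ≤ ∑ i, ∫ x in U i, g (f x) ∂μ := Finset.sum_le_sum fun i _ =>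
        hg.measureReal_mul_map_setAverage_le hgc hf hgf (U i)
    _ = ∫ x in ⋃ i, U i, g (f x) ∂μ :=
        (integral_iUnion_fintype hUm hUd fun _ => hgf.integrableOn).symm
    _ = ∫ x, g (f x) ∂μ := by rw [Measure.restrict_eq_self_of_ae_mem hU]

end Jensen

section GibbsFamily

variable {n N : ℕ} {p : Fin (N + 1) → ℝ}

@[simp] lemma extPair_zero (ab : Fin N → ℝ × EuclideanSpace ℝ (Fin n)) : extPair ab 0 = 0 := rfl

@[simp] lemma extPair_succ (ab : Fin N → ℝ × EuclideanSpace ℝ (Fin n)) (k : Fin N) :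
    extPair ab k.succ = ab k := rfl

noncomputable def extPairCLM : (Fin N → ℝ × EuclideanSpace ℝ (Fin n)) →L[ℝ]
    Fin (N + 1) → ℝ × EuclideanSpace ℝ (Fin n) :=
  ContinuousLinearMap.pi (Fin.cases 0 ContinuousLinearMap.proj)

@[simp] lemma extPairCLM_apply (ab : Fin N → ℝ × EuclideanSpace ℝ (Fin n)) :
    extPairCLM ab = extPair ab := by
  ext l <;> cases l using Fin.cases <;> rfl

lemma gibbsWeight_eq_softmax (ab : Fin N → ℝ × EuclideanSpace ℝ (Fin n)) (k : Fin (N + 1))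
    (y : EuclideanSpace ℝ (Fin n)) :
    gibbsWeight p ab k y = softmax p (potential (extPair ab) y) k := rfl

noncomputable def gibbsStat (p : Fin (N + 1) → ℝ) (ab : Fin N → ℝ × EuclideanSpace ℝ (Fin n))
    (y : EuclideanSpace ℝ (Fin n)) : Fin N → ℝ × EuclideanSpace ℝ (Fin n) :=
  fun k => (gibbsWeight p ab k.succ y, gibbsWeight p ab k.succ y • y)

lemma continuous_gibbsStat (hp : ∀ l, 0 < p l) (ab : Fin N → ℝ × EuclideanSpace ℝ (Fin n)) :
    Continuous (gibbsStat p ab) := by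
  refine continuous_pi fun k => ?_
  have h := (continuous_softmax hp k.succ).comp (continuous_potential (extPair ab))
  exact h.prodMk (h.smul continuous_id)

lemma norm_gibbsStat_le (hp : ∀ l, 0 < p l) (ab : Fin N → ℝ × EuclideanSpace ℝ (Fin n))
    (y : EuclideanSpace ℝ (Fin n)) : ‖gibbsStat p ab y‖ ≤ 1 + ‖y‖ := by
  refine pi_norm_le_iff_of_nonneg (by positivity) |>.2 fun k => norm_prod_le_iff.2 ⟨?_, ?_⟩
  all_goals
    simp only [gibbsStat, gibbsWeight_eq_softmax, norm_smul,
      Real.norm_of_nonneg (softmax_nonneg hp _ _)]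
    have := softmax_le_one hp (potential (extPair ab) y) k.succ
  · linarith [norm_nonneg y]
  · nlinarith [norm_nonneg y]

variable {μ : Measure (EuclideanSpace ℝ (Fin n))} [IsFiniteMeasure μ]

lemma integrable_gibbsStat (hp : ∀ l, 0 < p l) (hμ : Integrable (fun y => ‖y‖) μ)
    (ab : Fin N → ℝ × EuclideanSpace ℝ (Fin n)) : Integrable (gibbsStat p ab) μ :=
  Integrable.mono' ((integrable_const 1).add hμ) (continuous_gibbsStat hp ab).aestronglyMeasurable
    (ae_of_all _ (norm_gibbsStat_le hp ab))

lemma integral_gibbsStat (hp : ∀ l, 0 < p l) (hμ : Integrable (fun y => ‖y‖) μ)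
    (ab : Fin N → ℝ × EuclideanSpace ℝ (Fin n)) :
    ∫ y, gibbsStat p ab y ∂μ = fun k =>
      (∫ y, gibbsWeight p ab k.succ y ∂μ, ∫ y, gibbsWeight p ab k.succ y • y ∂μ) := by
  have h := integrable_gibbsStat hp hμ ab
  funext k
  rw [eval_integral (integrable_pi_iff.1 h) k]
  exact integral_pair (h.eval k).fst (h.eval k).snd

lemma hasFDerivAt_logSumExp_potential_extPair (hp : ∀ l, 0 < p l)
    (ab : Fin N → ℝ × EuclideanSpace ℝ (Fin n)) (y : EuclideanSpace ℝ (Fin n)) :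
    HasFDerivAt (fun ab => logSumExp p (potential (extPair ab) y))
      (pairing (gibbsStat p ab y)) ab := by
  have h := (hasFDerivAt_logSumExp hp _).comp ab
    ((potentialCLM y).comp extPairCLM).hasFDerivAt
  simp only [ContinuousLinearMap.coe_comp, Function.comp_def, extPairCLM_apply,
    potentialCLM_apply] at h
  refine h.congr_fderiv (ContinuousLinearMap.ext fun v => ?_)
  simp [pairing_apply, Fin.sum_univ_succ, gibbsStat, gibbsWeight_eq_softmax, potential,
    real_inner_smul_right, real_inner_comm, mul_add]

noncomputable def dualFunctional (μ : Measure (EuclideanSpace ℝ (Fin n))) (p : Fin (N + 1) → ℝ)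
    (t ab : Fin N → ℝ × EuclideanSpace ℝ (Fin n)) : ℝ :=
  ∫ y, logSumExp p (potential (extPair ab) y) ∂μ - pairing t ab

lemma hasFDerivAt_dualFunctional (hp : ∀ l, 0 < p l) (hμ : Integrable (fun y => ‖y‖) μ)
    (t ab : Fin N → ℝ × EuclideanSpace ℝ (Fin n)) :
    HasFDerivAt (dualFunctional μ p t) (pairing (∫ y, gibbsStat p ab y ∂μ - t)) ab := by
  have hint : HasFDerivAt (fun ab => ∫ y, logSumExp p (potential (extPair ab) y) ∂μ)
      (∫ y, pairing (gibbsStat p ab y) ∂μ) ab :=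
    hasFDerivAt_integral_of_dominated_of_fderiv_le
      (bound := fun y => ‖pairing (ι := Fin N) (E := EuclideanSpace ℝ (Fin n))‖ * (1 + ‖y‖))
      (s := Set.univ) Filter.univ_mem
      (Filter.Eventually.of_forall fun _ =>
        (continuous_logSumExp_potential hp _).aestronglyMeasurable)
      (integrable_logSumExp_potential hμ hp _)
      ((pairing (ι := Fin N) (E := EuclideanSpace ℝ (Fin n))).continuous.comp
        (continuous_gibbsStat hp ab)).aestronglyMeasurable
      (ae_of_all _ fun y w _ => (pairing.le_opNorm _).trans
        (mul_le_mul_of_nonneg_left (norm_gibbsStat_le hp w y) (norm_nonneg _)))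
      (((integrable_const 1).add hμ).const_mul _)
      (ae_of_all _ fun y w _ => hasFDerivAt_logSumExp_potential_extPair hp w y)
  rw [map_sub, ← ContinuousLinearMap.integral_comp_comm pairing (integrable_gibbsStat hp hμ ab)]
  exact hint.sub (pairing t).hasFDerivAt

end GibbsFamily

section EntropyBound

variable {n N : ℕ} {p : Fin (N + 1) → ℝ}

lemma sum_mul_log_le_dualFunctional {μ₁ μ₂ : Measure (EuclideanSpace ℝ (Fin n))}
    [IsProbabilityMeasure μ₁] [IsFiniteMeasure μ₂]
    (hmom₁ : Integrable (fun x => ‖x‖) μ₁) (hmom₂ : Integrable (fun x => ‖x‖) μ₂)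
    (hconv : ∀ f : EuclideanSpace ℝ (Fin n) → ℝ, ConvexOn ℝ Set.univ f → Integrable f μ₂ →
      Integrable f μ₁ ∧ (∫ x, f x ∂μ₁) ≤ ∫ x, f x ∂μ₂)
    {U : Fin (N + 1) → Set (EuclideanSpace ℝ (Fin n))} (hUmeas : ∀ k, MeasurableSet (U k))
    (hUdisj : Pairwise (Function.onFun Disjoint U)) (hUfull : μ₁ (⋃ k, U k) = 1)
    (hpdef : ∀ k, p k = (μ₁ (U k)).toReal) (hppos : ∀ k, 0 < p k)
    {x : Fin (N + 1) → EuclideanSpace ℝ (Fin n)} (hxdef : ∀ k, x k = (p k)⁻¹ • ∫ z in U k, z ∂μ₁)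
    (ab : Fin N → ℝ × EuclideanSpace ℝ (Fin n)) :
    ∑ l, p l * Real.log (p l)
      ≤ dualFunctional μ₂ p (fun k => (p k.succ, p k.succ • x k.succ)) ab := by
  have hg := convexOn_logSumExp_potential hppos (extPair ab)
  obtain ⟨hg₁, hg_le⟩ := hconv _ hg (integrable_logSumExp_potential hmom₂ hppos _)
  have hU : ∀ᵐ y ∂μ₁, y ∈ ⋃ k, U k :=
    ae_iff.2 ((prob_compl_eq_zero_iff (MeasurableSet.iUnion hUmeas)).2 hUfull)
  have hjensen := hg.sum_measureReal_mul_map_setAverage_le (f := fun y => y)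
    (continuous_logSumExp_potential hppos _)
    ((integrable_norm_iff continuous_id.aestronglyMeasurable).1 hmom₁) hg₁ hUmeas hUdisj hU
  have hbary : ∀ l, ⨍ y in U l, y ∂μ₁ = x l := fun l => by
    rw [setAverage_eq, hxdef, hpdef, measureReal_def]
  simp only [hbary, measureReal_def, ← hpdef] at hjensen
  have hterm : ∀ l, p l * (Real.log (p l) + potential (extPair ab) (x l) l)
      ≤ p l * logSumExp p (potential (extPair ab) (x l)) :=
    fun l => mul_le_mul_of_nonneg_left (log_add_le_logSumExp hppos _ l) (hppos l).le
  have hsplit : ∑ l, p l * (Real.log (p l) + potential (extPair ab) (x l) l)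
      = ∑ l, p l * Real.log (p l) + pairing (fun k => (p k.succ, p k.succ • x k.succ)) ab := by
    simp [mul_add, Finset.sum_add_distrib, Fin.sum_univ_succ (n := N), potential, pairing_apply,
      real_inner_smul_right, real_inner_comm]
    ring
  have := Finset.sum_le_sum fun l (_ : l ∈ Finset.univ) => hterm l
  rw [dualFunctional]
  linarith

end EntropyBound

theorem mainLemma_finite_version_general (n N : ℕ)
    (μ₁ μ₂ : Measure (EuclideanSpace ℝ (Fin n)))
    [IsProbabilityMeasure μ₁] [IsProbabilityMeasure μ₂]
    (hmom₁ : Integrable (fun x => ‖x‖) μ₁)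
    (hmom₂ : Integrable (fun x => ‖x‖) μ₂)
    (hconv : ∀ f : EuclideanSpace ℝ (Fin n) → ℝ, ConvexOn ℝ Set.univ f → Integrable f μ₂ →
      Integrable f μ₁ ∧ (∫ x, f x ∂μ₁) ≤ ∫ x, f x ∂μ₂)
    (U : Fin (N + 1) → Set (EuclideanSpace ℝ (Fin n)))
    (hUmeas : ∀ k, MeasurableSet (U k))
    (hUdisj : Pairwise (Function.onFun Disjoint U))
    (hUfull : μ₁ (⋃ k, U k) = 1)
    (p : Fin (N + 1) → ℝ) (hpdef : ∀ k, p k = (μ₁ (U k)).toReal)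
    (hppos : ∀ k, 0 < p k)
    (x : Fin (N + 1) → EuclideanSpace ℝ (Fin n))
    (hxdef : ∀ k, x k = (p k)⁻¹ • ∫ z in U k, z ∂μ₁)
    (F : (Fin N → ℝ × EuclideanSpace ℝ (Fin n)) →
      (Fin N → ℝ × EuclideanSpace ℝ (Fin n)))
    (hF : ∀ ab k, F ab k =
      (∫ y, gibbsWeight p ab k.succ y ∂μ₂,
       ∫ y, gibbsWeight p ab k.succ y • y ∂μ₂)) :
    (fun k : Fin N => (p k.succ, p k.succ • x k.succ)) ∈ closure (Set.range F) := by
  set t : Fin N → ℝ × EuclideanSpace ℝ (Fin n) := fun k => (p k.succ, p k.succ • x k.succ)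
  have hFint : ∀ ab, ∫ y, gibbsStat p ab y ∂μ₂ = F ab := fun ab => by
    rw [integral_gibbsStat hppos hmom₂]
    exact funext fun k => (hF ab k).symm
  have hderiv : ∀ ab, HasFDerivAt (dualFunctional μ₂ p t) (pairing (F ab - t)) ab := fun ab => by
    rw [← hFint ab]
    exact hasFDerivAt_dualFunctional hppos hmom₂ t ab
  have hbdd : ∀ ab, ∑ l, p l * Real.log (p l) ≤ dualFunctional μ₂ p t ab :=
    sum_mul_log_le_dualFunctional hmom₁ hmom₂ hconv hUmeas hUdisj hUfull hpdef hppos hxdef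
  refine Metric.mem_closure_iff.2 fun δ hδ => ?_
  obtain ⟨ab, hab⟩ :=
    exists_norm_fderiv_lt_of_forall_le (B := pairing) sq_norm_le_pairing_self hderiv hbdd hδ
  refine ⟨F ab, Set.mem_range_self ab, ?_⟩
  rw [dist_comm, dist_eq_norm]
  linarith [norm_le_norm_apply_of_sq_norm_le pairing sq_norm_le_pairing_self (F ab - t)]

/-- Main Lemma, finite version. Under convex order, zero barycenter of `μ₁`
and the no-hyperplane-concentration condition on `μ₂`, the target point
`((p₁, p₁x₁), …, (p_N, p_N x_N))` lies in the closure of the range of the map `F`. -/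
theorem mainLemma_finite_version (n N : ℕ)
    (μ₁ μ₂ : Measure (EuclideanSpace ℝ (Fin n)))
    [IsProbabilityMeasure μ₁] [IsProbabilityMeasure μ₂]
    (hmom₁ : Integrable (fun x => ‖x‖) μ₁)
    (hmom₂ : Integrable (fun x => ‖x‖) μ₂)
    (hconv : ∀ f : EuclideanSpace ℝ (Fin n) → ℝ, ConvexOn ℝ Set.univ f → Integrable f μ₂ →
      Integrable f μ₁ ∧ (∫ x, f x ∂μ₁) ≤ ∫ x, f x ∂μ₂)
    (hbary : (∫ x, x ∂μ₁) = 0)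
    (hplane : ∀ w : EuclideanSpace ℝ (Fin n), w ≠ 0 → ∀ c : ℝ,
      μ₂ {y | ⟪w, y⟫ = c} < 1)
    (U : Fin (N + 1) → Set (EuclideanSpace ℝ (Fin n)))
    (hUmeas : ∀ k, MeasurableSet (U k))
    (hUdisj : Pairwise (Function.onFun Disjoint U))
    (hUfull : μ₁ (⋃ k, U k) = 1)
    (p : Fin (N + 1) → ℝ) (hpdef : ∀ k, p k = (μ₁ (U k)).toReal)
    (hppos : ∀ k, 0 < p k)
    (x : Fin (N + 1) → EuclideanSpace ℝ (Fin n))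
    (hxdef : ∀ k, x k = (p k)⁻¹ • ∫ z in U k, z ∂μ₁)
    (F : (Fin N → ℝ × EuclideanSpace ℝ (Fin n)) →
      (Fin N → ℝ × EuclideanSpace ℝ (Fin n)))
    (hF : ∀ ab k, F ab k =
      (∫ y, gibbsWeight p ab k.succ y ∂μ₂,
       ∫ y, gibbsWeight p ab k.succ y • y ∂μ₂)) :
    (fun k : Fin N => (p k.succ, p k.succ • x k.succ)) ∈ closure (Set.range F) :=
  mainLemma_finite_version_general n N μ₁ μ₂ hmom₁ hmom₂ hconv U hUmeas hUdisj hUfull p hpdef hppos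
    x hxdef F hF
end

section
/- Let N ≥ 1, let p₀, p₁, …, p_N > 0, and let μ₂ be a Borel probability measure on ℝⁿ with finite first moment such that μ₂(H) < 1 for every affine hyperplane H ⊂ ℝⁿ. Then the function Φ : (ℝ × ℝⁿ)^N → ℝ defined by Φ((a₁,b₁),…,(a_N,b_N)) := ∫_{ℝⁿ} log( p₀ + Σ_{l=1}^N p_l exp(a_l + ⟨b_l, y⟩) ) dμ₂(y) is well defined (finite) and strictly convex on (ℝ × ℝⁿ)^N. -/
set_option maxHeartbeats 1000000

open MeasureTheory
open scoped RealInnerProductSpace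

namespace PhiAux

lemma exp_combo_le {t : ℝ} (ht : 0 ≤ t) (ht1 : t ≤ 1) (x y : ℝ) :
    Real.exp (t * x + (1 - t) * y) ≤ t * Real.exp x + (1 - t) * Real.exp y := by
  have := convexOn_exp.2 (Set.mem_univ x) (Set.mem_univ y) ht
    (by linarith : (0:ℝ) ≤ 1 - t) (by ring : t + (1 - t) = 1)
  simpa [smul_eq_mul] using this

lemma exp_combo_lt {t : ℝ} (ht : 0 < t) (ht1 : t < 1) {x y : ℝ} (hxy : x ≠ y) :
    Real.exp (t * x + (1 - t) * y) < t * Real.exp x + (1 - t) * Real.exp y := by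
  have := strictConvexOn_exp.2 (Set.mem_univ x) (Set.mem_univ y) hxy ht
    (by linarith : (0:ℝ) < 1 - t) (by ring : t + (1 - t) = 1)
  simpa [smul_eq_mul] using this

section key
variable {ι : Type*} [Fintype ι]

lemma sum_exp_pos (q u : ι → ℝ) (hq : ∀ i, 0 < q i) [Nonempty ι] :
    0 < ∑ i, q i * Real.exp (u i) :=
  Finset.sum_pos (fun i _ => mul_pos (hq i) (Real.exp_pos _)) Finset.univ_nonempty

lemma key_main (q u v : ι → ℝ) [Nonempty ι] (hq : ∀ i, 0 < q i)
    {t : ℝ} (ht : 0 < t) (ht1 : t < 1) :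
    (∑ i, q i * Real.exp (t * u i + (1 - t) * v i)) ≤
      Real.exp (t * Real.log (∑ i, q i * Real.exp (u i))
        + (1 - t) * Real.log (∑ i, q i * Real.exp (v i))) ∧
    ((∃ i, u i - Real.log (∑ i, q i * Real.exp (u i))
        ≠ v i - Real.log (∑ i, q i * Real.exp (v i))) →
      (∑ i, q i * Real.exp (t * u i + (1 - t) * v i)) <
      Real.exp (t * Real.log (∑ i, q i * Real.exp (u i))
        + (1 - t) * Real.log (∑ i, q i * Real.exp (v i)))) := by
  set A := ∑ i, q i * Real.exp (u i) with hA
  set B := ∑ i, q i * Real.exp (v i) with hB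
  have hApos : 0 < A := sum_exp_pos q u hq
  have hBpos : 0 < B := sum_exp_pos q v hq
  set L := t * Real.log A + (1 - t) * Real.log B with hL
  set a : ι → ℝ := fun i => u i - Real.log A with ha
  set b : ι → ℝ := fun i => v i - Real.log B with hb
  have hterm : ∀ i, q i * Real.exp (t * u i + (1 - t) * v i)
      = Real.exp L * (q i * Real.exp (t * a i + (1 - t) * b i)) := by
    intro i
    rw [ha, hb]
    rw [show t * (u i - Real.log A) + (1 - t) * (v i - Real.log B)
        = (t * u i + (1 - t) * v i) - L by rw [hL]; ring]
    rw [Real.exp_sub]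
    field_simp
  have hsuma : ∑ i, q i * Real.exp (a i) = 1 := by
    have : ∀ i, q i * Real.exp (a i) = (q i * Real.exp (u i)) / A := by
      intro i
      rw [ha, Real.exp_sub, Real.exp_log hApos]
      ring
    rw [Finset.sum_congr rfl fun i _ => this i, ← Finset.sum_div, ← hA,
      div_self hApos.ne']
  have hsumb : ∑ i, q i * Real.exp (b i) = 1 := by
    have : ∀ i, q i * Real.exp (b i) = (q i * Real.exp (v i)) / B := by
      intro i
      rw [hb, Real.exp_sub, Real.exp_log hBpos]
      ring
    rw [Finset.sum_congr rfl fun i _ => this i, ← Finset.sum_div, ← hB,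
      div_self hBpos.ne']
  have htotal : ∑ i, q i * (t * Real.exp (a i) + (1 - t) * Real.exp (b i)) = 1 := by
    have : ∀ i, q i * (t * Real.exp (a i) + (1 - t) * Real.exp (b i))
        = t * (q i * Real.exp (a i)) + (1 - t) * (q i * Real.exp (b i)) := fun i => by ring
    rw [Finset.sum_congr rfl fun i _ => this i, Finset.sum_add_distrib,
      ← Finset.mul_sum, ← Finset.mul_sum, hsuma, hsumb]
    ring
  have heq : ∑ i, q i * Real.exp (t * u i + (1 - t) * v i)
      = Real.exp L * ∑ i, q i * Real.exp (t * a i + (1 - t) * b i) := by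
    rw [Finset.mul_sum]; exact Finset.sum_congr rfl fun i _ => hterm i
  constructor
  · have hle1 : ∑ i, q i * Real.exp (t * a i + (1 - t) * b i) ≤ 1 := by
      calc ∑ i, q i * Real.exp (t * a i + (1 - t) * b i)
          ≤ ∑ i, q i * (t * Real.exp (a i) + (1 - t) * Real.exp (b i)) :=
            Finset.sum_le_sum fun i _ =>
              mul_le_mul_of_nonneg_left (exp_combo_le ht.le ht1.le _ _) (hq i).le
        _ = 1 := htotal
    calc ∑ i, q i * Real.exp (t * u i + (1 - t) * v i)
        = Real.exp L * ∑ i, q i * Real.exp (t * a i + (1 - t) * b i) := heq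
      _ ≤ Real.exp L * 1 := mul_le_mul_of_nonneg_left hle1 (Real.exp_pos L).le
      _ = Real.exp L := mul_one _
  · rintro ⟨i0, hi0⟩
    have hlt1 : ∑ i, q i * Real.exp (t * a i + (1 - t) * b i) < 1 := by
      calc ∑ i, q i * Real.exp (t * a i + (1 - t) * b i)
          < ∑ i, q i * (t * Real.exp (a i) + (1 - t) * Real.exp (b i)) := by
            refine Finset.sum_lt_sum (fun i _ =>
              mul_le_mul_of_nonneg_left (exp_combo_le ht.le ht1.le _ _) (hq i).le)
              ⟨i0, Finset.mem_univ i0, ?_⟩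
            exact mul_lt_mul_of_pos_left (exp_combo_lt ht ht1 hi0) (hq i0)
        _ = 1 := htotal
    calc ∑ i, q i * Real.exp (t * u i + (1 - t) * v i)
        = Real.exp L * ∑ i, q i * Real.exp (t * a i + (1 - t) * b i) := heq
      _ < Real.exp L * 1 := (mul_lt_mul_iff_right₀ (Real.exp_pos L)).2 hlt1
      _ = Real.exp L := mul_one _

lemma key_le (q u v : ι → ℝ) [Nonempty ι] (hq : ∀ i, 0 < q i)
    {t : ℝ} (ht : 0 < t) (ht1 : t < 1) :
    Real.log (∑ i, q i * Real.exp (t * u i + (1 - t) * v i)) ≤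
      t * Real.log (∑ i, q i * Real.exp (u i))
        + (1 - t) * Real.log (∑ i, q i * Real.exp (v i)) := by
  have h := (key_main q u v hq ht ht1).1
  have hpos : 0 < ∑ i, q i * Real.exp (t * u i + (1 - t) * v i) :=
    sum_exp_pos q _ hq
  calc Real.log (∑ i, q i * Real.exp (t * u i + (1 - t) * v i))
      ≤ Real.log (Real.exp _) := Real.log_le_log hpos h
    _ = _ := Real.log_exp _

lemma key_lt (q u v : ι → ℝ) [Nonempty ι] (hq : ∀ i, 0 < q i)
    {t : ℝ} (ht : 0 < t) (ht1 : t < 1)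
    {i j : ι} (hij : u i - v i ≠ u j - v j) :
    Real.log (∑ i, q i * Real.exp (t * u i + (1 - t) * v i)) <
      t * Real.log (∑ i, q i * Real.exp (u i))
        + (1 - t) * Real.log (∑ i, q i * Real.exp (v i)) := by
  have hex : ∃ k, u k - Real.log (∑ i, q i * Real.exp (u i))
      ≠ v k - Real.log (∑ i, q i * Real.exp (v i)) := by
    by_contra h
    push_neg at h
    apply hij
    have hi := h i
    have hj := h j
    linarith [hi, hj]
  have h := (key_main q u v hq ht ht1).2 hex
  have hpos : 0 < ∑ i, q i * Real.exp (t * u i + (1 - t) * v i) :=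
    sum_exp_pos q _ hq
  calc Real.log (∑ i, q i * Real.exp (t * u i + (1 - t) * v i))
      < Real.log (Real.exp _) := Real.log_lt_log hpos h
    _ = _ := Real.log_exp _

end key

noncomputable def W {N n : ℕ} (ab : Fin N → ℝ × EuclideanSpace ℝ (Fin n))
    (y : EuclideanSpace ℝ (Fin n)) : Fin (N + 1) → ℝ :=
  Fin.cons 0 (fun l => (ab l).1 + ⟪(ab l).2, y⟫)

lemma W_zero {N n : ℕ} (ab : Fin N → ℝ × EuclideanSpace ℝ (Fin n)) (y) :
    W ab y 0 = 0 := rfl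

lemma W_succ {N n : ℕ} (ab : Fin N → ℝ × EuclideanSpace ℝ (Fin n)) (y) (l : Fin N) :
    W ab y l.succ = (ab l).1 + ⟪(ab l).2, y⟫ := by
  simp [W]

lemma sum_eq {N n : ℕ} (p : Fin (N + 1) → ℝ) (ab : Fin N → ℝ × EuclideanSpace ℝ (Fin n)) (y) :
    p 0 + ∑ l : Fin N, p l.succ * Real.exp ((ab l).1 + ⟪(ab l).2, y⟫)
      = ∑ k : Fin (N + 1), p k * Real.exp (W ab y k) := by
  rw [Fin.sum_univ_succ]
  simp [W_zero, W_succ]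

lemma D_pos {N n : ℕ} (p : Fin (N + 1) → ℝ) (hppos : ∀ k, 0 < p k)
    (ab : Fin N → ℝ × EuclideanSpace ℝ (Fin n)) (y) :
    0 < p 0 + ∑ l : Fin N, p l.succ * Real.exp ((ab l).1 + ⟪(ab l).2, y⟫) := by
  have : 0 ≤ ∑ l : Fin N, p l.succ * Real.exp ((ab l).1 + ⟪(ab l).2, y⟫) :=
    Finset.sum_nonneg fun l _ => (mul_pos (hppos _) (Real.exp_pos _)).le
  linarith [hppos 0]

lemma integrable_log_sum {N n : ℕ} (p : Fin (N + 1) → ℝ) (hppos : ∀ k, 0 < p k)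
    (μ₂ : Measure (EuclideanSpace ℝ (Fin n))) [IsProbabilityMeasure μ₂]
    (hmom₂ : Integrable (fun y => ‖y‖) μ₂)
    (ab : Fin N → ℝ × EuclideanSpace ℝ (Fin n)) :
    Integrable (fun y => Real.log
      (p 0 + ∑ l : Fin N, p l.succ * Real.exp ((ab l).1 + ⟪(ab l).2, y⟫))) μ₂ := by
  set M : ℝ := ∑ l : Fin N, ‖(ab l).2‖ with hM
  have hMnn : 0 ≤ M := Finset.sum_nonneg fun l _ => norm_nonneg _
  set S : ℝ := p 0 + ∑ l : Fin N, p l.succ * Real.exp ((ab l).1) with hS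
  have hSpos : 0 < S := by
    have : 0 ≤ ∑ l : Fin N, p l.succ * Real.exp ((ab l).1) :=
      Finset.sum_nonneg fun l _ => (mul_pos (hppos _) (Real.exp_pos _)).le
    have := hppos 0
    rw [hS]; linarith
  have hcont : Continuous (fun y : EuclideanSpace ℝ (Fin n) =>
      p 0 + ∑ l : Fin N, p l.succ * Real.exp ((ab l).1 + ⟪(ab l).2, y⟫)) := by
    refine continuous_const.add (continuous_finset_sum _ fun l _ => ?_)
    exact continuous_const.mul
      ((Real.continuous_exp).comp (continuous_const.add
        ((continuous_const.inner continuous_id : Continuous fun y => ⟪(ab l).2, y⟫))))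
  have hmeas : AEStronglyMeasurable (fun y : EuclideanSpace ℝ (Fin n) => Real.log
      (p 0 + ∑ l : Fin N, p l.succ * Real.exp ((ab l).1 + ⟪(ab l).2, y⟫))) μ₂ :=
    (Real.measurable_log.comp hcont.measurable).aestronglyMeasurable
  have hbound : ∀ y, ‖Real.log
      (p 0 + ∑ l : Fin N, p l.succ * Real.exp ((ab l).1 + ⟪(ab l).2, y⟫))‖
      ≤ |Real.log (p 0)| + |Real.log S| + M * ‖y‖ := by
    intro y
    set D : ℝ := p 0 + ∑ l : Fin N, p l.succ * Real.exp ((ab l).1 + ⟪(ab l).2, y⟫) with hD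
    have hDpos : 0 < D := D_pos p hppos ab y
    have hlow : Real.log (p 0) ≤ Real.log D := by
      apply Real.log_le_log (hppos 0)
      rw [hD]
      have : 0 ≤ ∑ l : Fin N, p l.succ * Real.exp ((ab l).1 + ⟪(ab l).2, y⟫) :=
        Finset.sum_nonneg fun l _ => (mul_pos (hppos _) (Real.exp_pos _)).le
      linarith
    have hDle : D ≤ S * Real.exp (M * ‖y‖) := by
      have hexp1 : (1:ℝ) ≤ Real.exp (M * ‖y‖) :=
        Real.one_le_exp (mul_nonneg hMnn (norm_nonneg _))
      have hterm : ∀ l : Fin N, p l.succ * Real.exp ((ab l).1 + ⟪(ab l).2, y⟫)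
          ≤ (p l.succ * Real.exp ((ab l).1)) * Real.exp (M * ‖y‖) := by
        intro l
        rw [mul_assoc, ← Real.exp_add]
        apply mul_le_mul_of_nonneg_left _ (hppos _).le
        apply Real.exp_le_exp.2
        have h1 : ⟪(ab l).2, y⟫ ≤ ‖(ab l).2‖ * ‖y‖ := real_inner_le_norm _ _
        have h2 : ‖(ab l).2‖ ≤ M := by
          rw [hM]
          exact Finset.single_le_sum (f := fun l : Fin N => ‖(ab l).2‖)
            (fun l _ => norm_nonneg _) (Finset.mem_univ l)
        nlinarith [norm_nonneg y]
      calc D = p 0 + ∑ l : Fin N, p l.succ * Real.exp ((ab l).1 + ⟪(ab l).2, y⟫) := hD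
        _ ≤ p 0 * Real.exp (M * ‖y‖)
            + ∑ l : Fin N, (p l.succ * Real.exp ((ab l).1)) * Real.exp (M * ‖y‖) := by
            refine add_le_add ?_ (Finset.sum_le_sum fun l _ => hterm l)
            nlinarith [hppos 0]
        _ = S * Real.exp (M * ‖y‖) := by
            rw [hS, ← Finset.sum_mul]; ring
    have hup : Real.log D ≤ Real.log S + M * ‖y‖ := by
      calc Real.log D ≤ Real.log (S * Real.exp (M * ‖y‖)) := Real.log_le_log hDpos hDle
        _ = Real.log S + M * ‖y‖ := by rw [Real.log_mul hSpos.ne' (Real.exp_pos _).ne',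
              Real.log_exp]
    rw [Real.norm_eq_abs, abs_le]
    constructor
    · have := abs_nonneg (Real.log S)
      have := mul_nonneg hMnn (norm_nonneg y)
      have := neg_abs_le (Real.log (p 0))
      linarith
    · have := le_abs_self (Real.log S)
      have := neg_abs_le (Real.log (p 0))
      have := abs_nonneg (Real.log (p 0))
      linarith
  have hg : Integrable (fun y : EuclideanSpace ℝ (Fin n) =>
      |Real.log (p 0)| + |Real.log S| + M * ‖y‖) μ₂ :=
    (integrable_const _).add (hmom₂.const_mul M)
  refine hg.mono hmeas (Filter.Eventually.of_forall fun y => ?_)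
  refine (hbound y).trans ?_
  rw [Real.norm_eq_abs]
  exact le_abs_self _

end PhiAux

/-- The function
`Φ((a₁,b₁),…,(a_N,b_N)) = ∫ log(p₀ + Σ_{l=1}^N p_l exp(a_l + ⟨b_l,y⟩)) dμ₂`
is well defined (the integrand is integrable) and strictly convex, provided `μ₂` is a
probability measure with finite first moment giving mass `< 1` to every affine hyperplane. -/
theorem Phi_welldefined_strictConvex (n N : ℕ) (hN : 1 ≤ N)
    (p : Fin (N + 1) → ℝ) (hppos : ∀ k, 0 < p k)
    (μ₂ : Measure (EuclideanSpace ℝ (Fin n))) [IsProbabilityMeasure μ₂]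
    (hmom₂ : Integrable (fun y => ‖y‖) μ₂)
    (hplane : ∀ w : EuclideanSpace ℝ (Fin n), w ≠ 0 → ∀ c : ℝ,
      μ₂ {y | ⟪w, y⟫ = c} < 1) :
    (∀ ab : Fin N → ℝ × EuclideanSpace ℝ (Fin n),
      Integrable (fun y => Real.log
        (p 0 + ∑ l : Fin N, p l.succ * Real.exp ((ab l).1 + ⟪(ab l).2, y⟫))) μ₂) ∧
    StrictConvexOn ℝ Set.univ
      (fun ab : Fin N → ℝ × EuclideanSpace ℝ (Fin n) =>
        ∫ y, Real.log
          (p 0 + ∑ l : Fin N, p l.succ * Real.exp ((ab l).1 + ⟪(ab l).2, y⟫)) ∂μ₂) := by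
  have hInt := fun ab => PhiAux.integrable_log_sum p hppos μ₂ hmom₂ ab
  refine ⟨hInt, convex_univ, ?_⟩
  intro x hx z hz hxz t s ht hs hts
  have hs' : s = 1 - t := by linarith
  subst hs'
  have ht1 : t < 1 := by linarith
  simp only [smul_eq_mul]
  -- notation for integrands
  set Fm : EuclideanSpace ℝ (Fin n) → ℝ := fun y => Real.log
      (p 0 + ∑ l : Fin N, p l.succ * Real.exp
        (((t • x + (1 - t) • z) l).1 + ⟪((t • x + (1 - t) • z) l).2, y⟫)) with hFm
  set Fx : EuclideanSpace ℝ (Fin n) → ℝ := fun y => Real.log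
      (p 0 + ∑ l : Fin N, p l.succ * Real.exp ((x l).1 + ⟪(x l).2, y⟫)) with hFx
  set Fz : EuclideanSpace ℝ (Fin n) → ℝ := fun y => Real.log
      (p 0 + ∑ l : Fin N, p l.succ * Real.exp ((z l).1 + ⟪(z l).2, y⟫)) with hFz
  have hWmid : ∀ (y : EuclideanSpace ℝ (Fin n)) (k : Fin (N + 1)),
      PhiAux.W (t • x + (1 - t) • z) y k
        = t * PhiAux.W x y k + (1 - t) * PhiAux.W z y k := by
    intro y k
    refine Fin.cases ?_ (fun l => ?_) k
    · simp [PhiAux.W_zero]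
    · rw [PhiAux.W_succ, PhiAux.W_succ, PhiAux.W_succ]
      have h0 : (t • x + (1 - t) • z) l = t • x l + (1 - t) • z l := by
        simp [Pi.add_apply, Pi.smul_apply]
      rw [h0]
      simp only [Prod.fst_add, Prod.smul_fst, Prod.snd_add, Prod.smul_snd,
        inner_add_left, real_inner_smul_left, smul_eq_mul]
      ring
  -- pointwise inequality
  have hle : ∀ y, Fm y ≤ t * Fx y + (1 - t) * Fz y := by
    intro y
    rw [hFm, hFx, hFz]
    simp only
    rw [PhiAux.sum_eq p _ y, PhiAux.sum_eq p x y, PhiAux.sum_eq p z y]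
    calc Real.log (∑ k, p k * Real.exp (PhiAux.W (t • x + (1 - t) • z) y k))
        = Real.log (∑ k, p k * Real.exp
            (t * PhiAux.W x y k + (1 - t) * PhiAux.W z y k)) := by
          congr 1
          exact Finset.sum_congr rfl fun k _ => by rw [hWmid y k]
      _ ≤ _ := PhiAux.key_le p (PhiAux.W x y) (PhiAux.W z y) hppos ht ht1
  -- a set of positive measure where the inequality is strict
  obtain ⟨l₀, hl₀⟩ : ∃ l, x l ≠ z l := by
    by_contra h
    push_neg at h
    exact hxz (funext h)
  obtain ⟨Sg, hSgpos, hSgne⟩ : ∃ Sg : Set (EuclideanSpace ℝ (Fin n)),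
      0 < μ₂ Sg ∧ ∀ y ∈ Sg, (x l₀).1 - (z l₀).1 + ⟪(x l₀).2 - (z l₀).2, y⟫ ≠ 0 := by
    by_cases hb : (x l₀).2 = (z l₀).2
    · refine ⟨Set.univ, by simp, fun y _ => ?_⟩
      have hfst : (x l₀).1 ≠ (z l₀).1 := by
        intro h1
        exact hl₀ (Prod.ext h1 hb)
      rw [hb]
      simp [sub_self, inner_zero_left]
      intro h
      exact hfst (by linarith)
    · have hw0 : (x l₀).2 - (z l₀).2 ≠ 0 := sub_ne_zero.2 hb
      set c : ℝ := (z l₀).1 - (x l₀).1 with hc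
      refine ⟨{y | ⟪(x l₀).2 - (z l₀).2, y⟫ = c}ᶜ, ?_, fun y hy => ?_⟩
      · have hmeasH : MeasurableSet {y : EuclideanSpace ℝ (Fin n) |
            ⟪(x l₀).2 - (z l₀).2, y⟫ = c} := by
          have : Continuous fun y : EuclideanSpace ℝ (Fin n) =>
              ⟪(x l₀).2 - (z l₀).2, y⟫ :=
            continuous_const.inner continuous_id
          exact this.measurable (measurableSet_singleton c)
        rw [prob_compl_eq_one_sub hmeasH]
        have hlt := hplane _ hw0 c
        exact tsub_pos_iff_lt.2 hlt
      · intro h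
        apply hy
        simp only [Set.mem_setOf_eq, hc]
        linarith
  -- strict pointwise inequality on Sg
  have hlt : ∀ y ∈ Sg, Fm y < t * Fx y + (1 - t) * Fz y := by
    intro y hy
    rw [hFm, hFx, hFz]
    simp only
    rw [PhiAux.sum_eq p _ y, PhiAux.sum_eq p x y, PhiAux.sum_eq p z y]
    have hij : PhiAux.W x y l₀.succ - PhiAux.W z y l₀.succ
        ≠ PhiAux.W x y 0 - PhiAux.W z y 0 := by
      rw [PhiAux.W_succ, PhiAux.W_succ, PhiAux.W_zero, PhiAux.W_zero]
      have := hSgne y hy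
      rw [inner_sub_left] at this
      intro h
      apply this
      linarith
    calc Real.log (∑ k, p k * Real.exp (PhiAux.W (t • x + (1 - t) • z) y k))
        = Real.log (∑ k, p k * Real.exp
            (t * PhiAux.W x y k + (1 - t) * PhiAux.W z y k)) := by
          congr 1
          exact Finset.sum_congr rfl fun k _ => by rw [hWmid y k]
      _ < _ := PhiAux.key_lt p (PhiAux.W x y) (PhiAux.W z y) hppos ht ht1 hij
  -- conclude by integrating
  have hIm : Integrable Fm μ₂ := hInt _
  have hIx : Integrable Fx μ₂ := hInt _
  have hIz : Integrable Fz μ₂ := hInt _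
  set g : EuclideanSpace ℝ (Fin n) → ℝ :=
    fun y => (t * Fx y + (1 - t) * Fz y) - Fm y with hgdef
  have hg_int : Integrable g μ₂ :=
    ((hIx.const_mul t).add (hIz.const_mul (1 - t))).sub hIm
  have hg_nonneg : 0 ≤ g := fun y => sub_nonneg.2 (hle y)
  have hsupp : Sg ⊆ Function.support g := by
    intro y hy
    have : 0 < g y := sub_pos.2 (hlt y hy)
    exact this.ne'
  have hpos : 0 < ∫ y, g y ∂μ₂ :=
    (integral_pos_iff_support_of_nonneg hg_nonneg hg_int).2
      (lt_of_lt_of_le hSgpos (measure_mono hsupp))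
  have hI1 : Integrable (fun y => t * Fx y + (1 - t) * Fz y) μ₂ :=
    (hIx.const_mul t).add (hIz.const_mul (1 - t))
  have hsplit : ∫ y, g y ∂μ₂
      = (t * ∫ y, Fx y ∂μ₂ + (1 - t) * ∫ y, Fz y ∂μ₂) - ∫ y, Fm y ∂μ₂ := by
    have h1 := integral_sub hI1 hIm
    have h2 := integral_add (hIx.const_mul t) (hIz.const_mul (1 - t))
    rw [integral_const_mul, integral_const_mul] at h2
    calc ∫ y, g y ∂μ₂
        = (∫ y, t * Fx y + (1 - t) * Fz y ∂μ₂) - ∫ y, Fm y ∂μ₂ := h1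
      _ = _ := by rw [h2]
  rw [hsplit] at hpos
  linarith
end
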